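/- Let γ ∈ ℝ and let F = (F_x)_{x∈ℝ^d} be a γ-coherent germ: there is φ ∈ D with ∫φ ≠ 0 such that for every compact K there is α_K ≤ min{0,γ} with |(F_z − F_y)(φ_y^ε)| ≲ ε^{α_K}(|z−y|+ε)^{γ−α_K} uniformly for y,z ∈ K, ε ∈ (0,1]. Then for every compact K ⊆ ℝ^d there exists β_K < γ such that |F_x(φ_x^ε)| ≲ ε^{β_K} uniformly for x ∈ K and ε ∈ (0,1]. -/

import Mathlib

open MeasureTheory Metric Set Filter

noncomputable section

abbrev Ed (d : ℕ) := EuclideanSpace ℝ (Fin d)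

/-- Test functions: smooth compactly supported functions on ℝ^d. -/
def IsTestFunction {d : ℕ} (φ : Ed d → ℝ) : Prop :=
  ContDiff ℝ (⊤ : ℕ∞) φ ∧ HasCompactSupport φ

/-- The scaled test function `φ_x^λ(z) = λ^{-d} φ(λ⁻¹(z - x))`. -/
def scaled {d : ℕ} (φ : Ed d → ℝ) (x : Ed d) (l : ℝ) : Ed d → ℝ :=
  fun z => (l ^ d)⁻¹ * φ (l⁻¹ • (z - x))

/-- The `C^r` norm: sup of the norms of the iterated derivatives of order ≤ r. -/
def Cnorm {d : ℕ} (r : ℕ) (φ : Ed d → ℝ) : ℝ :=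
  ⨆ i : Fin (r + 1), ⨆ x : Ed d, ‖iteratedFDeriv ℝ (i : ℕ) φ x‖

/-- The family `B_r` of test functions supported in `B(0,1)` with `C^r` norm at most 1. -/
def Br {d : ℕ} (r : ℕ) (ψ : Ed d → ℝ) : Prop :=
  IsTestFunction ψ ∧ tsupport ψ ⊆ closedBall (0 : Ed d) 1 ∧ Cnorm r ψ ≤ 1

/-- A linear functional is a distribution if on every compact set it is bounded
by some `C^r` norm. -/
def IsDistribution {d : ℕ} (T : (Ed d → ℝ) →ₗ[ℝ] ℝ) : Prop :=
  ∀ K : Set (Ed d), IsCompact K → ∃ r : ℕ, ∃ C : ℝ,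
    ∀ φ : Ed d → ℝ, IsTestFunction φ → tsupport φ ⊆ K → |T φ| ≤ C * Cnorm r φ

/-- A germ: a measurable family of distributions. -/
def IsGerm {d : ℕ} (F : Ed d → ((Ed d → ℝ) →ₗ[ℝ] ℝ)) : Prop :=
  (∀ x, IsDistribution (F x)) ∧
  ∀ ψ : Ed d → ℝ, IsTestFunction ψ → Measurable fun x => F x ψ

/-- Monomial `y^k` for a multi-index `k`. -/
def mono {d : ℕ} (k : Fin d → ℕ) (y : Ed d) : ℝ := ∏ i, (y i) ^ (k i)

/-- Convolution of two functions. -/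
def conv {d : ℕ} (f g : Ed d → ℝ) : Ed d → ℝ := fun x => ∫ y, f (x - y) * g y

/-- `rIndex α` is the smallest integer `r > -α` (for `α ≤ 0`). -/
def rIndex (α : ℝ) : ℕ := Nat.floor (-α) + 1

/-- Negative Hölder space condition `T ∈ C^α` for `α ≤ 0`. -/
def HolderNeg {d : ℕ} (α : ℝ) (T : (Ed d → ℝ) →ₗ[ℝ] ℝ) : Prop :=
  ∀ K : Set (Ed d), IsCompact K → ∃ C : ℝ, ∀ x ∈ K, ∀ ε ∈ Set.Ioc (0:ℝ) 1,
    ∀ ψ : Ed d → ℝ, Br (rIndex α) ψ → |T (scaled ψ x ε)| ≤ C * ε ^ α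

/-- `(α,γ)`-coherence of a germ with respect to the test function φ. -/
def AlphaGammaCoherent {d : ℕ} (α γ : ℝ) (F : Ed d → ((Ed d → ℝ) →ₗ[ℝ] ℝ))
    (φ : Ed d → ℝ) : Prop :=
  ∀ K : Set (Ed d), IsCompact K → ∃ C : ℝ, ∀ y ∈ K, ∀ z ∈ K, ∀ ε ∈ Set.Ioc (0:ℝ) 1,
    |F z (scaled φ y ε) - F y (scaled φ y ε)| ≤ C * ε ^ α * (‖z - y‖ + ε) ^ (γ - α)

/-- Global homogeneity bound β for a germ with respect to the test function φ. -/
def HomBound {d : ℕ} (β : ℝ) (F : Ed d → ((Ed d → ℝ) →ₗ[ℝ] ℝ)) (φ : Ed d → ℝ) : Prop :=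
  ∀ K : Set (Ed d), IsCompact K → ∃ C : ℝ, ∀ x ∈ K, ∀ ε ∈ Set.Ioc (0:ℝ) 1,
    |F x (scaled φ x ε)| ≤ C * ε ^ β

section aux
variable {d : ℕ}

lemma aux_bdd (ψ : Ed d → ℝ) (hψ : IsTestFunction ψ) (i : ℕ) :
    BddAbove (Set.range fun z => ‖iteratedFDeriv ℝ i ψ z‖) :=
  ((hψ.1.continuous_iteratedFDeriv ((by exact_mod_cast le_top))).norm).bddAbove_range_of_hasCompactSupport
    (hψ.2.iteratedFDeriv i).norm

lemma Cnorm_nonneg (r : ℕ) (ψ : Ed d → ℝ) : 0 ≤ Cnorm r ψ :=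
  Real.iSup_nonneg fun _ => Real.iSup_nonneg fun _ => norm_nonneg _

lemma norm_le_Cnorm (r : ℕ) (ψ : Ed d → ℝ) (hψ : IsTestFunction ψ) (i : Fin (r+1)) (z : Ed d) :
    ‖iteratedFDeriv ℝ (i : ℕ) ψ z‖ ≤ Cnorm r ψ := by
  unfold Cnorm
  exact (le_ciSup (aux_bdd ψ hψ i) z).trans
    (le_ciSup (Set.finite_range fun j : Fin (r+1) => ⨆ w, ‖iteratedFDeriv ℝ (j : ℕ) ψ w‖).bddAbove i)

lemma Cnorm_le (r : ℕ) (ψ : Ed d → ℝ) {B : ℝ}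
    (h : ∀ i : Fin (r+1), ∀ z, ‖iteratedFDeriv ℝ (i : ℕ) ψ z‖ ≤ B) : Cnorm r ψ ≤ B :=
  ciSup_le fun i => ciSup_le fun z => h i z

lemma scaled_eq (φ : Ed d → ℝ) (x : Ed d) (ε : ℝ) :
    scaled φ x ε = (ε ^ d)⁻¹ • ((fun w => φ (w - ε⁻¹ • x)) ∘
      (ε⁻¹ • (ContinuousLinearMap.id ℝ (Ed d)))) := by
  funext z
  simp [scaled, Function.comp, smul_sub, smul_eq_mul]

lemma itfd_comp_sub (f : Ed d → ℝ) (hf : ContDiff ℝ (⊤ : ℕ∞) f) (a : Ed d) (n : ℕ) :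
    ∀ z, iteratedFDeriv ℝ n (fun w => f (w - a)) z = iteratedFDeriv ℝ n f (z - a) := by
  induction n with
  | zero => intro z; ext m; simp
  | succ n ih =>
    intro z
    rw [iteratedFDeriv_succ_eq_comp_left, iteratedFDeriv_succ_eq_comp_left]
    have heq : (iteratedFDeriv ℝ n fun w => f (w - a)) = fun w => iteratedFDeriv ℝ n f (w - a) :=
      funext ih
    have hdiff : DifferentiableAt ℝ (iteratedFDeriv ℝ n f) (z - a) :=
      (hf.differentiable_iteratedFDeriv (by exact_mod_cast lt_top_iff_ne_top.2 (by simp))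
        ).differentiableAt
    have hfd : HasFDerivAt (fun w => iteratedFDeriv ℝ n f (w - a))
        (fderiv ℝ (iteratedFDeriv ℝ n f) (z - a)) z := by
      have h2 : HasFDerivAt (fun w : Ed d => w - a) (ContinuousLinearMap.id ℝ (Ed d)) z :=
        (hasFDerivAt_id z).sub_const a
      have h3 := hdiff.hasFDerivAt.comp z h2
      rw [ContinuousLinearMap.comp_id] at h3
      exact h3
    simp only [Function.comp_apply, heq, hfd.fderiv]

lemma scaled_contDiff (φ : Ed d → ℝ) (hφ : IsTestFunction φ) (x : Ed d) (ε : ℝ) :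
    ContDiff ℝ (⊤ : ℕ∞) (scaled φ x ε) := by
  apply ContDiff.mul contDiff_const
  exact hφ.1.comp (((contDiff_id.sub contDiff_const)).const_smul ε⁻¹)

lemma scaled_tsupport (φ : Ed d → ℝ) {R : ℝ} (hR : tsupport φ ⊆ closedBall 0 R) (hR0 : 0 ≤ R)
    (x : Ed d) {ε : ℝ} (hε : 0 < ε) (hε1 : ε ≤ 1) :
    tsupport (scaled φ x ε) ⊆ closedBall x R := by
  apply closure_minimal _ Metric.isClosed_closedBall
  intro z hz
  have hz' : φ (ε⁻¹ • (z - x)) ≠ 0 := by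
    intro h; apply hz; simp [scaled, h]
  have hm : ε⁻¹ • (z - x) ∈ tsupport φ := subset_closure (by simpa [Function.support] using hz')
  have := hR hm
  rw [mem_closedBall, dist_zero_right, norm_smul] at this
  rw [mem_closedBall, dist_eq_norm]
  have hεn : ‖ε⁻¹‖ = ε⁻¹ := by rw [Real.norm_eq_abs, abs_of_pos (by positivity)]
  rw [hεn] at this
  have h1 : ‖z - x‖ ≤ ε * R := by
    have := mul_le_mul_of_nonneg_left this (le_of_lt hε)
    rwa [← mul_assoc, mul_inv_cancel₀ (ne_of_gt hε), one_mul] at this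
  exact h1.trans (by nlinarith)

lemma scaled_test (φ : Ed d → ℝ) (hφ : IsTestFunction φ) {R : ℝ}
    (hR : tsupport φ ⊆ closedBall 0 R) (hR0 : 0 ≤ R)
    (x : Ed d) {ε : ℝ} (hε : 0 < ε) (hε1 : ε ≤ 1) : IsTestFunction (scaled φ x ε) := by
  refine ⟨scaled_contDiff φ hφ x ε, ?_⟩
  exact HasCompactSupport.of_support_subset_isCompact (isCompact_closedBall x R)
    ((subset_closure).trans (scaled_tsupport φ hR hR0 x hε hε1))

lemma scaled_itfd_norm_le (φ : Ed d → ℝ) (hφ : IsTestFunction φ) (x : Ed d) {ε : ℝ}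
    (hε : 0 < ε) (n : ℕ) (z : Ed d) :
    ‖iteratedFDeriv ℝ n (scaled φ x ε) z‖ ≤
      (ε ^ d)⁻¹ * (ε⁻¹) ^ n * ‖iteratedFDeriv ℝ n φ (ε⁻¹ • (z - x))‖ := by
  have hg : ContDiff ℝ (⊤ : ℕ∞) (fun w : Ed d => φ (w - ε⁻¹ • x)) :=
    hφ.1.comp (contDiff_id.sub contDiff_const)
  have hgA : ContDiff ℝ (⊤ : ℕ∞) ((fun w : Ed d => φ (w - ε⁻¹ • x)) ∘
      (ε⁻¹ • (ContinuousLinearMap.id ℝ (Ed d)))) :=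
    hg.comp (ε⁻¹ • (ContinuousLinearMap.id ℝ (Ed d))).contDiff
  rw [scaled_eq φ x ε, iteratedFDeriv_const_smul_apply (hgA.of_le (by exact_mod_cast le_top)).contDiffAt,
    ContinuousLinearMap.iteratedFDeriv_comp_right _ hg z (by exact_mod_cast le_top), norm_smul]
  have h0 : (0:ℝ) ≤ (ε ^ d)⁻¹ := by positivity
  have hnorm : ‖ε⁻¹ • (ContinuousLinearMap.id ℝ (Ed d))‖ ≤ ε⁻¹ := by
    apply ContinuousLinearMap.opNorm_le_bound _ (by positivity)
    intro y
    rw [ContinuousLinearMap.smul_apply, ContinuousLinearMap.id_apply, norm_smul,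
      Real.norm_eq_abs, abs_of_pos (by positivity)]
  have hb := ContinuousMultilinearMap.norm_compContinuousLinearMap_le
    (iteratedFDeriv ℝ n (fun w : Ed d => φ (w - ε⁻¹ • x))
      ((ε⁻¹ • (ContinuousLinearMap.id ℝ (Ed d))) z))
    (fun _ : Fin n => ε⁻¹ • (ContinuousLinearMap.id ℝ (Ed d)))
  have hgz : iteratedFDeriv ℝ n (fun w : Ed d => φ (w - ε⁻¹ • x))
      ((ε⁻¹ • (ContinuousLinearMap.id ℝ (Ed d))) z) =
      iteratedFDeriv ℝ n φ (ε⁻¹ • (z - x)) := by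
    rw [itfd_comp_sub φ hφ.1 (ε⁻¹ • x) n]
    congr 1
    simp [smul_sub]
  rw [hgz] at hb ⊢
  have hprod : (∏ _i : Fin n, ‖ε⁻¹ • (ContinuousLinearMap.id ℝ (Ed d))‖) ≤ (ε⁻¹) ^ n := by
    rw [Finset.prod_const, Finset.card_fin]
    exact pow_le_pow_left₀ (norm_nonneg _) hnorm n
  calc |(ε ^ d)⁻¹| *
        ‖(iteratedFDeriv ℝ n φ (ε⁻¹ • (z - x))).compContinuousLinearMap
          fun _ => ε⁻¹ • (ContinuousLinearMap.id ℝ (Ed d))‖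
      ≤ (ε ^ d)⁻¹ * (‖iteratedFDeriv ℝ n φ (ε⁻¹ • (z - x))‖ *
          ∏ _i : Fin n, ‖ε⁻¹ • (ContinuousLinearMap.id ℝ (Ed d))‖) := by
        rw [abs_of_nonneg h0]
        exact mul_le_mul_of_nonneg_left hb h0
    _ ≤ (ε ^ d)⁻¹ * (‖iteratedFDeriv ℝ n φ (ε⁻¹ • (z - x))‖ * (ε⁻¹) ^ n) := by
        exact mul_le_mul_of_nonneg_left
          (mul_le_mul_of_nonneg_left hprod (norm_nonneg _)) h0
    _ = (ε ^ d)⁻¹ * (ε⁻¹) ^ n * ‖iteratedFDeriv ℝ n φ (ε⁻¹ • (z - x))‖ := by ring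

end aux

/-- Homogeneity bound for γ-coherent germs. -/
theorem stmt7 {d : ℕ} (γ : ℝ) (F : Ed d → ((Ed d → ℝ) →ₗ[ℝ] ℝ)) (hF : IsGerm F)
    (φ : Ed d → ℝ) (hφ : IsTestFunction φ) (hφi : (∫ x, φ x) ≠ 0)
    (hcoh : ∀ K : Set (Ed d), IsCompact K → ∃ α : ℝ, α ≤ min 0 γ ∧ ∃ C : ℝ,
      ∀ y ∈ K, ∀ z ∈ K, ∀ ε ∈ Set.Ioc (0:ℝ) 1,
        |F z (scaled φ y ε) - F y (scaled φ y ε)| ≤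
          C * ε ^ α * (‖z - y‖ + ε) ^ (γ - α)) :
    ∀ K : Set (Ed d), IsCompact K → ∃ β : ℝ, β < γ ∧ ∃ C : ℝ,
      ∀ x ∈ K, ∀ ε ∈ Set.Ioc (0:ℝ) 1, |F x (scaled φ x ε)| ≤ C * ε ^ β := by
  intro K hK
  rcases K.eq_empty_or_nonempty with hKe | ⟨z₀, hz₀⟩
  · exact ⟨γ - 1, by linarith, 0, by simp [hKe]⟩
  -- radius of the support of φ
  obtain ⟨R0, hR0⟩ := (hφ.2.isBounded).subset_closedBall 0
  set R : ℝ := max R0 0 with hRdef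
  have hRsub : tsupport φ ⊆ closedBall 0 R :=
    hR0.trans (closedBall_subset_closedBall (le_max_left _ _))
  have hRnn : 0 ≤ R := le_max_right _ _
  -- enlarged compact set and distribution bound at z₀
  have hK' : IsCompact (cthickening R K) := hK.cthickening
  obtain ⟨r, C₁, hC₁⟩ := (hF.1 z₀) (cthickening R K) hK'
  -- coherence on K
  obtain ⟨α, hα, C₂, hC₂⟩ := hcoh K hK
  -- diameter bound
  obtain ⟨D0, hD0⟩ := hK.isBounded.subset_closedBall z₀
  set D : ℝ := max D0 0 with hDdef
  have hDnn : 0 ≤ D := le_max_right _ _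
  have hDb : ∀ x ∈ K, ‖z₀ - x‖ ≤ D := by
    intro x hx
    have := hD0 hx
    rw [mem_closedBall, dist_eq_norm] at this
    calc ‖z₀ - x‖ = ‖x - z₀‖ := by rw [norm_sub_rev]
      _ ≤ D0 := this
      _ ≤ D := le_max_left _ _
  have hαγ : α ≤ γ := hα.trans (min_le_right _ _)
  refine ⟨min α (-((d + r : ℕ) : ℝ)) - 1, by
    have : min α (-((d + r : ℕ) : ℝ)) ≤ α := min_le_left _ _
    linarith, |C₁| * Cnorm r φ + |C₂| * (D + 1) ^ (γ - α), ?_⟩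
  intro x hx ε hε
  set β : ℝ := min α (-((d + r : ℕ) : ℝ)) - 1 with hβdef
  have hε0 : (0:ℝ) < ε := hε.1
  have hε1 : ε ≤ 1 := hε.2
  have htest : IsTestFunction (scaled φ x ε) := scaled_test φ hφ hRsub hRnn x hε0 hε1
  have hsupp : tsupport (scaled φ x ε) ⊆ cthickening R K :=
    (scaled_tsupport φ hRsub hRnn x hε0 hε1).trans (closedBall_subset_cthickening hx R)
  -- C^r norm bound for the scaled test function
  have hCn : Cnorm r (scaled φ x ε) ≤ (ε ^ (d + r))⁻¹ * Cnorm r φ := by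
    apply Cnorm_le
    intro i z
    have h1 := scaled_itfd_norm_le φ hφ x hε0 (i : ℕ) z
    have h2 : ‖iteratedFDeriv ℝ (i : ℕ) φ (ε⁻¹ • (z - x))‖ ≤ Cnorm r φ :=
      norm_le_Cnorm r φ hφ i _
    have hεi : (1:ℝ) ≤ ε⁻¹ := (one_le_inv₀ hε0).2 hε1
    have h3 : (ε⁻¹) ^ (i : ℕ) ≤ (ε⁻¹) ^ r :=
      pow_le_pow_right₀ hεi (Nat.lt_succ_iff.1 i.isLt)
    have h4 : (0:ℝ) ≤ (ε ^ d)⁻¹ := by positivity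
    calc ‖iteratedFDeriv ℝ (i : ℕ) (scaled φ x ε) z‖
        ≤ (ε ^ d)⁻¹ * (ε⁻¹) ^ (i : ℕ) * ‖iteratedFDeriv ℝ (i : ℕ) φ (ε⁻¹ • (z - x))‖ := h1
      _ ≤ (ε ^ d)⁻¹ * (ε⁻¹) ^ r * Cnorm r φ := by
          apply mul_le_mul _ h2 (norm_nonneg _) (by positivity)
          exact mul_le_mul_of_nonneg_left h3 h4
      _ = (ε ^ (d + r))⁻¹ * Cnorm r φ := by
          rw [pow_add, mul_inv, inv_pow]
  have hd1 : |F z₀ (scaled φ x ε)| ≤ (|C₁| * Cnorm r φ) * (ε ^ (d + r))⁻¹ := by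
    calc |F z₀ (scaled φ x ε)| ≤ C₁ * Cnorm r (scaled φ x ε) :=
          hC₁ _ htest hsupp
      _ ≤ |C₁| * Cnorm r (scaled φ x ε) :=
          mul_le_mul_of_nonneg_right (le_abs_self _) (Cnorm_nonneg _ _)
      _ ≤ |C₁| * ((ε ^ (d + r))⁻¹ * Cnorm r φ) :=
          mul_le_mul_of_nonneg_left hCn (abs_nonneg _)
      _ = (|C₁| * Cnorm r φ) * (ε ^ (d + r))⁻¹ := by ring
  have hcoh1 : |F z₀ (scaled φ x ε) - F x (scaled φ x ε)| ≤
      (|C₂| * (D + 1) ^ (γ - α)) * ε ^ α := by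
    have h5 := hC₂ x hx z₀ hz₀ ε hε
    have hb1 : (0:ℝ) ≤ ‖z₀ - x‖ + ε := by positivity
    have hb2 : ‖z₀ - x‖ + ε ≤ D + 1 := add_le_add (hDb x hx) hε1
    have hb3 : (‖z₀ - x‖ + ε) ^ (γ - α) ≤ (D + 1) ^ (γ - α) :=
      Real.rpow_le_rpow hb1 hb2 (by linarith)
    have hεα : (0:ℝ) < ε ^ α := Real.rpow_pos_of_pos hε0 _
    calc |F z₀ (scaled φ x ε) - F x (scaled φ x ε)|
        ≤ C₂ * ε ^ α * (‖z₀ - x‖ + ε) ^ (γ - α) := h5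
      _ ≤ |C₂| * ε ^ α * (D + 1) ^ (γ - α) := by
          apply mul_le_mul _ hb3 (Real.rpow_nonneg hb1 _) (by positivity)
          exact mul_le_mul_of_nonneg_right (le_abs_self _) (le_of_lt hεα)
      _ = (|C₂| * (D + 1) ^ (γ - α)) * ε ^ α := by ring
  -- compare powers of ε with ε ^ β
  have hεβ1 : (ε ^ (d + r))⁻¹ ≤ ε ^ β := by
    have : (ε ^ (d + r) : ℝ)⁻¹ = ε ^ (-((d + r : ℕ) : ℝ)) := by
      rw [Real.rpow_neg (le_of_lt hε0), Real.rpow_natCast]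
    rw [this]
    exact Real.rpow_le_rpow_of_exponent_ge hε0 hε1
      (by have := min_le_right α (-((d + r : ℕ) : ℝ)); simp only [hβdef]; linarith)
  have hεβ2 : ε ^ α ≤ ε ^ β :=
    Real.rpow_le_rpow_of_exponent_ge hε0 hε1
      (by have := min_le_left α (-((d + r : ℕ) : ℝ)); simp only [hβdef]; linarith)
  have hA : (0:ℝ) ≤ |C₁| * Cnorm r φ :=
    mul_nonneg (abs_nonneg _) (Cnorm_nonneg _ _)
  have hB : (0:ℝ) ≤ |C₂| * (D + 1) ^ (γ - α) :=
    mul_nonneg (abs_nonneg _) (Real.rpow_nonneg (by linarith) _)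
  calc |F x (scaled φ x ε)|
      ≤ |F z₀ (scaled φ x ε)| + |F z₀ (scaled φ x ε) - F x (scaled φ x ε)| := by
        have := abs_sub_abs_le_abs_sub (F x (scaled φ x ε)) (F z₀ (scaled φ x ε))
        have h7 : |F x (scaled φ x ε) - F z₀ (scaled φ x ε)| =
            |F z₀ (scaled φ x ε) - F x (scaled φ x ε)| := abs_sub_comm _ _
        linarith
    _ ≤ (|C₁| * Cnorm r φ) * (ε ^ (d + r))⁻¹ + (|C₂| * (D + 1) ^ (γ - α)) * ε ^ α :=
        add_le_add hd1 hcoh1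
    _ ≤ (|C₁| * Cnorm r φ) * ε ^ β + (|C₂| * (D + 1) ^ (γ - α)) * ε ^ β :=
        add_le_add (mul_le_mul_of_nonneg_left hεβ1 hA) (mul_le_mul_of_nonneg_left hεβ2 hB)
    _ = (|C₁| * Cnorm r φ + |C₂| * (D + 1) ^ (γ - α)) * ε ^ β := by ring
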